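/- arXiv:1809.10508 — 6 statements merged into one kernel-verified Lean document; each statement's English description precedes it below -/
import Mathlib

section
/- (Quadrangle condition.) Let G be a median graph and let u, v, w, z be vertices such that d_G(u,z) = k+1, v ≠ w, both v and w are adjacent to z, and d_G(u,v) = d_G(u,w) = k. Then there exists a unique vertex x adjacent to both v and w with d_G(u,x) = k−1. -/
open SimpleGraph Set

/-- The metric interval `I(u,v)` in a graph `G`. -/
def gInterval {V : Type*} (G : SimpleGraph V) (u v : V) : Set V :=
  {w | G.dist u w + G.dist w v = G.dist u v}

/-- A median graph: a connected graph in which every triplet of vertices has a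
unique median, i.e. a unique vertex in `I(x,y) ∩ I(y,z) ∩ I(z,x)`. -/
def MedianGraph {V : Type*} (G : SimpleGraph V) : Prop :=
  G.Connected ∧ ∀ x y z : V,
    ∃! m : V, m ∈ gInterval G x y ∧ m ∈ gInterval G y z ∧ m ∈ gInterval G z x

/-- `G` contains an induced `d`-dimensional hypercube all of whose vertices lie in `S`. -/
def HasCubeIn {V : Type*} (G : SimpleGraph V) (d : ℕ) (S : Set V) : Prop :=
  ∃ f : Finset (Fin d) → V, Function.Injective f ∧ (∀ A, f A ∈ S) ∧
    ∀ A B : Finset (Fin d), G.Adj (f A) (f B) ↔ (symmDiff A B).card = 1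

/-- `G` contains an induced `d`-dimensional hypercube `Q_d`. -/
def HasInducedCube {V : Type*} (G : SimpleGraph V) (d : ℕ) : Prop :=
  HasCubeIn G d Set.univ

/-- A cube-free (median) graph: no induced 3-dimensional hypercube. -/
def CubeFree {V : Type*} (G : SimpleGraph V) : Prop :=
  ¬ HasInducedCube G 3

/-- `g` is a gate of `v` in the set `S`. -/
def IsGate {V : Type*} (G : SimpleGraph V) (S : Set V) (v g : V) : Prop :=
  g ∈ S ∧ ∀ u ∈ S, G.dist v u = G.dist v g + G.dist g u

/-- A set of vertices is gated if every vertex has a gate in it. -/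
def Gated {V : Type*} (G : SimpleGraph V) (S : Set V) : Prop :=
  ∀ v : V, ∃ g : V, IsGate G S v g

/-- A set of vertices is convex if it contains the interval between any two of its members. -/
def GConvex {V : Type*} (G : SimpleGraph V) (S : Set V) : Prop :=
  ∀ u ∈ S, ∀ v ∈ S, gInterval G u v ⊆ S

/-- The star `St(z)`: the set of vertices lying in some induced hypercube of `G`
containing `z`. -/
def gStar {V : Type*} (G : SimpleGraph V) (z : V) : Set V :=
  {v | ∃ (d : ℕ) (f : Finset (Fin d) → V), Function.Injective f ∧
      (∀ A B : Finset (Fin d), G.Adj (f A) (f B) ↔ (symmDiff A B).card = 1) ∧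
      (∃ A, f A = z) ∧ (∃ A, f A = v)}

/-- The fiber `F(x)` of `x` with respect to a (gated) set `H`: all vertices having `x`
as their gate in `H`. -/
def fiber {V : Type*} (G : SimpleGraph V) (H : Set V) (x : V) : Set V :=
  {v | IsGate G H v x}

/-- Two fibers are neighboring when an edge of `G` joins them. -/
def Neighboring {V : Type*} (G : SimpleGraph V) (H : Set V) (x y : V) : Prop :=
  ∃ a ∈ fiber G H x, ∃ b ∈ fiber G H y, G.Adj a b

/-- The boundary `∂_y F(x)`: vertices of `F(x)` having a neighbor in `F(y)`. -/
def bdry {V : Type*} (G : SimpleGraph V) (H : Set V) (x y : V) : Set V :=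
  {a | a ∈ fiber G H x ∧ ∃ b ∈ fiber G H y, G.Adj a b}

/-- The total boundary `∂*F(x)`: union of the boundaries `∂_y F(x)` over all `y ∈ H`
adjacent to `x`. -/
def totalBdry {V : Type*} (G : SimpleGraph V) (H : Set V) (x : V) : Set V :=
  ⋃ (y : V) (_ : y ∈ H ∧ G.Adj x y), bdry G H x y

/-- The imprint set of `u` on `A`. -/
def imprints {V : Type*} (G : SimpleGraph V) (u : V) (A : Set V) : Set V :=
  {a ∈ A | gInterval G u a ∩ A = {a}}

/-- The halfspace `W(u,v)` associated with an edge `uv`. -/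
def halfspaceW {V : Type*} (G : SimpleGraph V) (u v : V) : Set V :=
  {z | G.dist z u < G.dist z v}

/-- **Quadrangle condition** in median graphs. -/
theorem quadrangle_condition {V : Type*} (G : SimpleGraph V) (hG : MedianGraph G)
    (u v w z : V) (k : ℕ) (huz : G.dist u z = k + 1) (hvw : v ≠ w)
    (hv : G.Adj v z) (hw : G.Adj w z)
    (huv : G.dist u v = k) (huw : G.dist u w = k) :
    ∃! x : V, G.Adj x v ∧ G.Adj x w ∧ G.dist u x = k - 1 := by
  obtain ⟨hconn, hmed⟩ := hG
  obtain ⟨m, ⟨hm1, hm2, hm3⟩, hmu⟩ := hmed u v w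
  simp only [gInterval, Set.mem_setOf_eq] at hm1 hm2 hm3
  have hvz : G.dist v z = 1 := SimpleGraph.dist_eq_one_iff_adj.mpr hv
  have hwz : G.dist w z = 1 := SimpleGraph.dist_eq_one_iff_adj.mpr hw
  have hvw2 : G.dist v w ≤ 2 := by
    calc G.dist v w ≤ G.dist v z + G.dist z w := hconn.dist_triangle
    _ = 2 := by rw [hvz, (G.dist_comm (u := z) (v := w)), hwz]
  rw [huv] at hm1
  rw [(G.dist_comm (u := w) (v := u)), huw] at hm3
  rw [(G.dist_comm (u := m) (v := v))] at hm1
  rw [(G.dist_comm (u := m) (v := u))] at hm3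
  have hvmwm : G.dist v m = G.dist w m := by omega
  have hvm1 : G.dist v m = 1 := by
    rcases Nat.lt_or_ge (G.dist v m) 1 with h | h
    · exfalso
      have h0 : G.dist v m = 0 := by omega
      have hvm : v = m := hconn.dist_eq_zero_iff.mp h0
      have hwm : w = m := hconn.dist_eq_zero_iff.mp (hvmwm ▸ h0)
      exact hvw (hvm.trans hwm.symm)
    · have : G.dist v m + G.dist m w = G.dist v w := hm2
      rw [(G.dist_comm (u := m) (v := w)), ← hvmwm] at this
      omega
  have hwm1 : G.dist w m = 1 := hvmwm ▸ hvm1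
  have hum : G.dist u m = k - 1 := by omega
  have hk1 : 1 ≤ k := by omega
  have hmv : G.Adj m v := SimpleGraph.dist_eq_one_iff_adj.mp ((G.dist_comm (u := m) (v := v)) ▸ hvm1)
  have hmw : G.Adj m w := SimpleGraph.dist_eq_one_iff_adj.mp ((G.dist_comm (u := m) (v := w)) ▸ hwm1)
  refine ⟨m, ⟨hmv, hmw, hum⟩, ?_⟩
  rintro x ⟨hxv, hxw, hxd⟩
  apply hmu
  have hxv1 : G.dist x v = 1 := SimpleGraph.dist_eq_one_iff_adj.mpr hxv
  have hxw1 : G.dist x w = 1 := SimpleGraph.dist_eq_one_iff_adj.mpr hxw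
  have hvw_eq : G.dist v w = 2 := by
    have : G.dist v m + G.dist m w = G.dist v w := hm2
    rw [(G.dist_comm (u := m) (v := w))] at this
    omega
  refine ⟨?_, ?_, ?_⟩ <;> simp only [gInterval, Set.mem_setOf_eq]
  · rw [hxd, hxv1, huv]; omega
  · rw [(G.dist_comm (u := v) (v := x)), hxv1, hxw1, hvw_eq]
  · rw [(G.dist_comm (u := w) (v := x)), hxw1, (G.dist_comm (u := x) (v := u)), hxd, (G.dist_comm (u := w) (v := u)), huw]; omega
end

section
/- Let G be a median graph and A a nonempty set of vertices of G. Then the following are equivalent: (1) A is gated; (2) A is convex; (3) the subgraph of G induced by A is connected and A is locally convex, i.e., for all x, y ∈ A with d_G(x,y) = 2 one has I(x,y) ⊆ A. -/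
/-!
Gated sets are convex in any connected graph: the gate of a vertex of `I(u,v)` is the vertex
itself. In a median graph, a point `g` of a convex set `A` nearest to `v` is its gate, because the
median of `v`, `g` and any `u ∈ A` lies in `I(g,u) ⊆ A` and in `I(v,g)`, hence equals `g`.

Conversely, median graphs are bipartite and satisfy the quadrangle condition. With local convexity
this lets one shorten every path in `A` that is not a geodesic of `G`, so a connected locally convex
set is isometric. Then, by induction on `d(x,y)`, every neighbour of `y` in `I(x,y)` lies in `A`,
and every other vertex of `I(x,y)` lies in the interval from `x` to such a neighbour.
-/

open SimpleGraph Set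

namespace SimpleGraph

variable {V : Type*} {G : SimpleGraph V} {x y u w : V}

lemma exists_adj_dist_add_one_of_dist_ne_zero (h : G.dist x y ≠ 0) :
    ∃ v, G.Adj x v ∧ G.dist v y + 1 = G.dist x y := by
  obtain ⟨p, hp⟩ := exists_walk_of_dist_ne_zero h
  cases p with
  | nil => simp at h
  | @cons _ v _ hadj q =>
    refine ⟨v, hadj, le_antisymm ?_ ?_⟩
    · have := dist_le q
      simp only [Walk.length_cons] at hp
      omega
    · have := hadj.reachable.dist_triangle_left y
      rwa [dist_eq_one_iff_adj.mpr hadj, add_comm] at this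

lemma Reachable.dist_map_le {W : Type*} {H : SimpleGraph W} (f : G →g H) (h : G.Reachable x y) :
    H.dist (f x) (f y) ≤ G.dist x y := by
  obtain ⟨p, hp⟩ := h.exists_walk_length_eq_dist
  simpa [hp] using dist_le (p.map f)

lemma Walk.mem_gInterval_of_length_eq_dist (p : G.Walk x y) (hp : p.length = G.dist x y)
    (hw : w ∈ p.support) : w ∈ gInterval G x y := by
  classical
  have hlen := congrArg Walk.length (p.take_spec hw)
  rw [Walk.length_append] at hlen
  have h₁ := dist_le (p.takeUntil w hw)
  have h₂ := dist_le (p.dropUntil w hw)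
  have h₃ := (p.takeUntil w hw).reachable.dist_triangle_left y
  show G.dist x w + G.dist w y = G.dist x y
  omega

lemma Connected.exists_adj_mem_gInterval (hc : G.Connected) (hw : w ∈ gInterval G x y)
    (hwy : w ≠ y) :
    ∃ v, G.Adj y v ∧ G.dist x v + 1 = G.dist x y ∧ w ∈ gInterval G x v := by
  have hw' : G.dist x w + G.dist w y = G.dist x y := hw
  obtain ⟨v, hyv, hvw⟩ :=
    exists_adj_dist_add_one_of_dist_ne_zero (mt hc.dist_eq_zero_iff.mp hwy.symm)
  have h₁ : G.dist x v ≤ G.dist x w + G.dist w v := hc.dist_triangle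
  have h₂ : G.dist x y ≤ G.dist x v + G.dist v y := hc.dist_triangle
  have hvy : G.dist v y = 1 := dist_eq_one_iff_adj.mpr hyv.symm
  have := dist_comm (G := G) (u := w) (v := v)
  have := dist_comm (G := G) (u := w) (v := y)
  exact ⟨v, hyv, by omega, show G.dist x w + G.dist w v = G.dist x v by omega⟩

end SimpleGraph

namespace MedianGraph

variable {V : Type*} {G : SimpleGraph V} {x y z u : V}

lemma dist_ne_of_adj (hG : MedianGraph G) (h : G.Adj x y) (u : V) :
    G.dist u x ≠ G.dist u y := by
  obtain ⟨m, ⟨hxy, hyu, hux⟩, -⟩ := hG.2 x y u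
  have hxy' : G.dist x m + G.dist m y = 1 := (dist_eq_one_iff_adj.mpr h) ▸ hxy
  have hyu' : G.dist y m + G.dist m u = G.dist y u := hyu
  have hux' : G.dist u m + G.dist m x = G.dist u x := hux
  rw [dist_comm (u := y) (v := m), dist_comm (u := y), dist_comm (u := m) (v := u)] at hyu'
  rw [dist_comm (u := x)] at hxy'
  omega

lemma dist_eq_two_of_adj_of_adj (hG : MedianGraph G) (hxy : x ≠ y) (hzx : G.Adj z x)
    (hzy : G.Adj z y) : G.dist x y = 2 := by
  have hle : G.dist x y ≤ G.dist x z + G.dist z y := hG.1.dist_triangle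
  rw [dist_comm (u := x) (v := z), dist_eq_one_iff_adj.mpr hzx, dist_eq_one_iff_adj.mpr hzy] at hle
  have h₀ : G.dist x y ≠ 0 := mt hG.1.dist_eq_zero_iff.mp hxy
  have h₁ : G.dist x y ≠ 1 := fun h ↦ hG.dist_ne_of_adj (dist_eq_one_iff_adj.mp h) z <| by
    rw [dist_eq_one_iff_adj.mpr hzx, dist_eq_one_iff_adj.mpr hzy]
  omega

/-- The quadrangle condition; the common neighbour is the median of `x`, `y`, `u`. -/
lemma exists_adj_adj_dist_add_one (hG : MedianGraph G) (hxy : G.dist x y = 2)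
    (hd : G.dist u x = G.dist u y) :
    ∃ m, G.Adj m x ∧ G.Adj m y ∧ G.dist u m + 1 = G.dist u x := by
  obtain ⟨m, ⟨hm₁, hm₂, hm₃⟩, -⟩ := hG.2 x y u
  have hm₁' : G.dist x m + G.dist m y = G.dist x y := hm₁
  have hm₂' : G.dist y m + G.dist m u = G.dist y u := hm₂
  have hm₃' : G.dist u m + G.dist m x = G.dist u x := hm₃
  rw [dist_comm (u := y) (v := m), dist_comm (u := y), dist_comm (u := m) (v := u)] at hm₂'
  rw [dist_comm (u := x)] at hm₁'
  have hmx : G.dist m x = 1 := by omega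
  have hmy : G.dist m y = 1 := by omega
  exact ⟨m, dist_eq_one_iff_adj.mp hmx, dist_eq_one_iff_adj.mp hmy, by omega⟩

end MedianGraph

def LocallyConvex {V : Type*} (G : SimpleGraph V) (A : Set V) : Prop :=
  ∀ x ∈ A, ∀ y ∈ A, G.dist x y = 2 → gInterval G x y ⊆ A

namespace LocallyConvex

variable {V : Type*} {G : SimpleGraph V} {A : Set V} {x y m : V}

lemma mem_of_adj_of_adj (hA : LocallyConvex G A) (hx : x ∈ A) (hy : y ∈ A)
    (hxy : G.dist x y = 2) (hxm : G.Adj x m) (hmy : G.Adj m y) : m ∈ A := by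
  apply hA x hx y hy hxy
  show G.dist x m + G.dist m y = G.dist x y
  rw [dist_eq_one_iff_adj.mpr hxm, dist_eq_one_iff_adj.mpr hmy, hxy]

lemma dist_induce_eq (hG : MedianGraph G) (hconn : (G.induce A).Connected)
    (hA : LocallyConvex G A) (x y : A) : (G.induce A).dist x y = G.dist x y := by
  induction hn : (G.induce A).dist x y using Nat.strong_induction_on generalizing y with
  | _ n IH =>
  have hle : G.dist (x : V) y ≤ n := hn ▸ (hconn x y).dist_map_le (Embedding.induce A).toHom
  rcases eq_or_ne x y with rfl | hxy
  · simp_all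
  obtain ⟨a, hya, hya'⟩ :=
    exists_adj_dist_add_one_of_dist_ne_zero (mt hconn.dist_eq_zero_iff.mp hxy.symm)
  rw [dist_comm, dist_comm (u := y), hn] at hya'
  have hxa : (G.induce A).dist x a = G.dist x a := IH _ (by omega) a rfl
  have hpar := hG.dist_ne_of_adj (induce_adj.mp hya) x
  have htri : G.dist (x : V) a ≤ G.dist (x : V) y + G.dist (y : V) a := hG.1.dist_triangle
  rw [dist_eq_one_iff_adj.mpr (induce_adj.mp hya)] at htri
  by_contra hne
  -- Otherwise `d(x,y) = n - 2`, and the last steps `b a y` of an `A`-geodesic are replaced by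
  -- `b m y` with `m ∈ A` closer to `x`.
  obtain ⟨b, hab, hab'⟩ :=
    exists_adj_dist_add_one_of_dist_ne_zero (G := G.induce A) (x := a) (y := x) (by
      rw [dist_comm]; omega)
  rw [dist_comm, dist_comm (u := a)] at hab'
  have hxb : (G.induce A).dist x b = G.dist x b := IH _ (by omega) b rfl
  have hby : (b : V) ≠ y := fun h ↦ by
    rw [Subtype.ext h] at hab'
    omega
  have hby2 := hG.dist_eq_two_of_adj_of_adj hby (induce_adj.mp hab) (induce_adj.mp hya).symm
  obtain ⟨m, hmb, hmy, hxm⟩ := hG.exists_adj_adj_dist_add_one (u := (x : V)) hby2 (by omega)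
  let M : A := ⟨m, hA.mem_of_adj_of_adj b.2 y.2 hby2 hmb.symm hmy⟩
  have hbM : (G.induce A).Adj b M := induce_adj.mpr hmb.symm
  have hMy : (G.induce A).Adj M y := induce_adj.mpr hmy
  have hxM₁ : (G.induce A).dist x M ≤ (G.induce A).dist x b + 1 :=
    dist_eq_one_iff_adj.mpr hbM ▸ hconn.dist_triangle
  have hxM₂ : (G.induce A).dist x M = G.dist x m := IH _ (by omega) M rfl
  have hxy₁ : (G.induce A).dist x y ≤ (G.induce A).dist x M + 1 :=
    dist_eq_one_iff_adj.mpr hMy ▸ hconn.dist_triangle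
  omega

lemma exists_adj_mem_dist_add_one (hG : MedianGraph G) (hconn : (G.induce A).Connected)
    (hA : LocallyConvex G A) (hx : x ∈ A) (hy : y ∈ A) (hxy : x ≠ y) :
    ∃ a ∈ A, G.Adj y a ∧ G.dist x a + 1 = G.dist x y := by
  obtain ⟨a, hya, ha⟩ := exists_adj_dist_add_one_of_dist_ne_zero (G := G.induce A)
    (x := ⟨y, hy⟩) (y := ⟨x, hx⟩) (by simpa [hconn.dist_eq_zero_iff] using hxy.symm)
  rw [dist_comm, dist_comm (u := (⟨y, hy⟩ : A)), hA.dist_induce_eq hG hconn,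
    hA.dist_induce_eq hG hconn] at ha
  exact ⟨a, a.2, induce_adj.mp hya, ha⟩

lemma gConvex (hG : MedianGraph G) (hconn : (G.induce A).Connected) (hA : LocallyConvex G A) :
    GConvex G A := by
  intro x hx y hy
  induction hk : G.dist x y using Nat.strong_induction_on generalizing y with
  | _ k IH =>
  intro w hw
  rcases eq_or_ne w y with rfl | hwy
  · exact hy
  obtain ⟨v, hyv, hxv, hwv⟩ := hG.1.exists_adj_mem_gInterval hw hwy
  suffices hv : v ∈ A from IH _ (by omega) v hv rfl hwv
  obtain ⟨a, ha, hya, hxa⟩ := hA.exists_adj_mem_dist_add_one hG hconn hx hy (by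
    rintro rfl
    simp at hxv)
  rcases eq_or_ne v a with rfl | hva
  · exact ha
  -- `v` and `a` span a square `v y a m` with `m ∈ I(x,a)`; local convexity at `m, y` gives `v`
  have hva2 := hG.dist_eq_two_of_adj_of_adj hva hyv hya
  obtain ⟨m, hmv, hma, hxm⟩ := hG.exists_adj_adj_dist_add_one (u := x) hva2 (by omega)
  have hmA : m ∈ A := IH _ (by omega) a ha rfl <| by
    show G.dist x m + G.dist m a = G.dist x a
    rw [dist_eq_one_iff_adj.mpr hma]
    omega
  have hmy : m ≠ y := by
    rintro rfl
    omega
  have hmy2 := hG.dist_eq_two_of_adj_of_adj hmy hma.symm hya.symm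
  exact hA.mem_of_adj_of_adj hmA hy hmy2 hmv hyv.symm

end LocallyConvex

section

variable {V : Type*} {G : SimpleGraph V} {A : Set V}

lemma Gated.gConvex (hc : G.Connected) (h : Gated G A) : GConvex G A := by
  intro u hu v hv w (hw : G.dist u w + G.dist w v = G.dist u v)
  obtain ⟨g, hg, hgate⟩ := h w
  have hwu := hgate u hu
  have hwv := hgate v hv
  have htri : G.dist u v ≤ G.dist u g + G.dist g v := hc.dist_triangle
  have := dist_comm (G := G) (u := u) (v := w)
  have := dist_comm (G := G) (u := u) (v := g)
  have hwg : G.dist w g = 0 := by omega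
  rwa [hc.dist_eq_zero_iff.mp hwg]

lemma GConvex.gated (hG : MedianGraph G) (hne : A.Nonempty) (h : GConvex G A) : Gated G A := by
  intro v
  obtain ⟨g, hg, hmin⟩ := exists_minimalFor_of_wellFoundedLT (· ∈ A) (G.dist v) hne
  refine ⟨g, hg, fun u hu ↦ ?_⟩
  obtain ⟨m, ⟨hvg, hgu, huv⟩, -⟩ := hG.2 v g u
  have hvg' : G.dist v m + G.dist m g = G.dist v g := hvg
  have hvm := hmin (h g hg u hu hgu) (by omega)
  obtain rfl : m = g := hG.1.dist_eq_zero_iff.mp (by omega)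
  have huv' : G.dist u m + G.dist m v = G.dist u v := huv
  rw [dist_comm (u := u), dist_comm (u := u), dist_comm (u := m) (v := v)] at huv'
  omega

lemma GConvex.induce_connected (hc : G.Connected) (hne : A.Nonempty) (h : GConvex G A) :
    (G.induce A).Connected :=
  have : Nonempty A := hne.to_subtype
  ⟨fun x y ↦
    have ⟨p, hp⟩ := hc.exists_walk_length_eq_dist x y
    ⟨p.induce A fun _ hw ↦ h x x.2 y y.2 (p.mem_gInterval_of_length_eq_dist hp hw)⟩⟩

end

/-- In a median graph, a nonempty set of vertices is gated iff it is convex iff it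
induces a connected subgraph and is locally convex. -/
theorem gated_iff_convex_iff_locally_convex {V : Type*} (G : SimpleGraph V)
    (hG : MedianGraph G) (A : Set V) (hA : A.Nonempty) :
    (Gated G A ↔ GConvex G A) ∧
    (GConvex G A ↔ ((G.induce A).Connected ∧
      ∀ x ∈ A, ∀ y ∈ A, G.dist x y = 2 → gInterval G x y ⊆ A)) :=
  ⟨⟨(·.gConvex hG.1), (·.gated hG hA)⟩,
    ⟨fun h ↦ ⟨h.induce_connected hG.1 hA, fun x hx y hy _ ↦ h x hx y hy⟩,
      fun ⟨hconn, hlc⟩ ↦ LocallyConvex.gConvex hG hconn hlc⟩⟩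
end

section
/- In a median graph G, every interval I(u,v) is a convex set of vertices. -/
open SimpleGraph Set

section Helpers

variable {V : Type*} {G : SimpleGraph V}

private lemma dC (G : SimpleGraph V) (a b : V) : G.dist a b = G.dist b a := dist_comm

/-- If `a ∈ I(u,v)` and `x ∈ I(u,a)` then `x ∈ I(u,v)`. -/
private lemma sub_left (hc : G.Connected) {u v a x : V} (ha : a ∈ gInterval G u v)
    (hx : x ∈ gInterval G u a) : x ∈ gInterval G u v := by
  simp only [gInterval, Set.mem_setOf_eq] at *
  have h1 : G.dist u v ≤ G.dist u x + G.dist x v := hc.dist_triangle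
  have h2 : G.dist x v ≤ G.dist x a + G.dist a v := hc.dist_triangle
  omega

/-- If `a ∈ I(u,v)` and `x ∈ I(a,v)` then `x ∈ I(u,v)`. -/
private lemma sub_right (hc : G.Connected) {u v a x : V} (ha : a ∈ gInterval G u v)
    (hx : x ∈ gInterval G a v) : x ∈ gInterval G u v := by
  simp only [gInterval, Set.mem_setOf_eq] at *
  have h1 : G.dist u v ≤ G.dist u x + G.dist x v := hc.dist_triangle
  have h2 : G.dist u x ≤ G.dist u a + G.dist a x := hc.dist_triangle
  omega

/-- Key lemma: if `x, y ∈ I(u,v)`, `x'` is adjacent to `x` and `x' ∈ I(x,y)`,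
then `x' ∈ I(u,v)`. Proved by strong induction on `dist x y`. -/
private lemma crux (hG : MedianGraph G) (u v x x' : V)
    (hx : x ∈ gInterval G u v) (hadj : G.Adj x x') :
    ∀ n y, G.dist x y = n → y ∈ gInterval G u v → x' ∈ gInterval G x y →
      x' ∈ gInterval G u v := by
  have hc := hG.1
  have hd1 : G.dist x x' = 1 := dist_eq_one_iff_adj.mpr hadj
  simp only [gInterval, Set.mem_setOf_eq] at hx
  intro n
  induction n using Nat.strong_induction_on with
  | _ n IH =>
  intro y hn hy hx'
  simp only [gInterval, Set.mem_setOf_eq] at hy hx' ⊢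
  rw [hd1] at hx'
  -- Step A (u) : the median of (u, x, x') is x or x'
  obtain ⟨m₁, ⟨hA1, hA2, hA3⟩, -⟩ := hG.2 u x x'
  simp only [gInterval, Set.mem_setOf_eq] at hA1 hA2 hA3
  rw [hd1] at hA2
  have hm₁ : G.dist x m₁ = 0 ∨ G.dist m₁ x' = 0 := by omega
  rcases hm₁ with h | h
  swap
  · -- m₁ = x' : x' ∈ I(u, x), so we are done
    have hmx : m₁ = x' := hc.dist_eq_zero_iff.mp h
    rw [hmx] at hA1
    have h1 : G.dist u v ≤ G.dist u x' + G.dist x' v := hc.dist_triangle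
    have h2 : G.dist x' v ≤ G.dist x' x + G.dist x v := hc.dist_triangle
    have := dC G x' x
    omega
  · -- m₁ = x : d u x' = d u x + 1
    have hmx : m₁ = x := (hc.dist_eq_zero_iff.mp h).symm
    rw [hmx] at hA3
    have hux' : G.dist u x' = G.dist u x + 1 := by
      have := dC G x' x; have := dC G x u; have := dC G x' u; omega
    -- Step A (v) : the median of (v, x, x') is x or x'
    obtain ⟨m₂, ⟨hB1, hB2, hB3⟩, -⟩ := hG.2 v x x'
    simp only [gInterval, Set.mem_setOf_eq] at hB1 hB2 hB3
    rw [hd1] at hB2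
    have hm₂ : G.dist x m₂ = 0 ∨ G.dist m₂ x' = 0 := by omega
    rcases hm₂ with h2 | h2
    swap
    · -- m₂ = x' : x' ∈ I(v, x), done
      have hmx2 : m₂ = x' := hc.dist_eq_zero_iff.mp h2
      rw [hmx2] at hB1
      have h1 : G.dist u v ≤ G.dist u x' + G.dist x' v := hc.dist_triangle
      have h2' : G.dist u x' ≤ G.dist u x + G.dist x x' := hc.dist_triangle
      have := dC G v x'; have := dC G x' x; have := dC G v x
      omega
    · -- m₂ = x : d v x' = d v x + 1
      have hmx2 : m₂ = x := (hc.dist_eq_zero_iff.mp h2).symm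
      rw [hmx2] at hB3
      have hvx' : G.dist v x' = G.dist v x + 1 := by
        have := dC G x' x; have := dC G x v; have := dC G x' v; omega
      -- Step B : median of (u, y, x')
      obtain ⟨m, ⟨hM1, hM2, hM3⟩, -⟩ := hG.2 u y x'
      simp only [gInterval, Set.mem_setOf_eq] at hM1 hM2 hM3
      by_cases hmx' : m = x'
      · -- x' ∈ I(u, y) ⊆ I(u, v)
        rw [hmx'] at hM1
        have h1 : G.dist u v ≤ G.dist u x' + G.dist x' v := hc.dist_triangle
        have h2' : G.dist x' v ≤ G.dist x' y + G.dist y v := hc.dist_triangle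
        omega
      · have hxm1 : G.dist x m ≤ 1 + G.dist x' m := by
          have := hc.dist_triangle (u := x) (v := x') (w := m); omega
        have hxm2 : G.dist x' m + 1 ≤ G.dist x m := by
          by_contra hcon
          push_neg at hcon
          have t1 : G.dist x y ≤ G.dist x m + G.dist m y := hc.dist_triangle
          have := dC G y m; have := dC G x' m; have := dC G x' y
          omega
        have hxm : G.dist x m = G.dist x' m + 1 := by omega
        have hle : G.dist x' m ≤ G.dist x' y := by
          have := dC G y m; have := dC G x' m; have := dC G x' y; omega
        have hmuv : G.dist u m + G.dist m v = G.dist u v := by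
          have h1 : G.dist u v ≤ G.dist u m + G.dist m v := hc.dist_triangle
          have h2' : G.dist m v ≤ G.dist m y + G.dist y v := hc.dist_triangle
          omega
        have hxmn : G.dist x m ≤ n := by omega
        rcases lt_or_eq_of_le hxmn with hlt | heq
        · exact IH (G.dist x m) hlt m rfl (by exact hmuv) (by
            show G.dist x x' + G.dist x' m = G.dist x m
            rw [hd1]; omega)
        · -- d x m = n forces m = y, hence y ∈ I(u, x')
          have hmy : m = y := by
            apply hc.dist_eq_zero_iff.mp
            have := dC G y m; have := dC G x' m; have := dC G x' y
            -- d m y = 0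
            omega
          rw [hmy] at hM3
          -- hM3 : d x' y + d y u = d x' u
          -- Step C : median of (v, y, x')
          obtain ⟨m', ⟨hN1, hN2, hN3⟩, -⟩ := hG.2 v y x'
          simp only [gInterval, Set.mem_setOf_eq] at hN1 hN2 hN3
          by_cases hmx'2 : m' = x'
          · -- x' ∈ I(v, y) ⊆ I(u, v)
            rw [hmx'2] at hN1
            have h1 : G.dist u v ≤ G.dist u x' + G.dist x' v := hc.dist_triangle
            have h2' : G.dist u x' ≤ G.dist u y + G.dist y x' := hc.dist_triangle
            have := dC G v x'; have := dC G x' y; have := dC G v y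
            omega
          · have hxm1' : G.dist x m' ≤ 1 + G.dist x' m' := by
              have := hc.dist_triangle (u := x) (v := x') (w := m'); omega
            have hxm2' : G.dist x' m' + 1 ≤ G.dist x m' := by
              by_contra hcon
              push_neg at hcon
              have t1 : G.dist x y ≤ G.dist x m' + G.dist m' y := hc.dist_triangle
              have := dC G y m'; have := dC G x' m'; have := dC G x' y
              omega
            have hxm' : G.dist x m' = G.dist x' m' + 1 := by omega
            have hle' : G.dist x' m' ≤ G.dist x' y := by
              have := dC G y m'; have := dC G x' m'; have := dC G x' y; omega
            have hmuv' : G.dist u m' + G.dist m' v = G.dist u v := by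
              have h1 : G.dist u v ≤ G.dist u m' + G.dist m' v := hc.dist_triangle
              have h2' : G.dist u m' ≤ G.dist u y + G.dist y m' := hc.dist_triangle
              have := dC G v m'; have := dC G m' y; have := dC G v y
              omega
            have hxmn' : G.dist x m' ≤ n := by omega
            rcases lt_or_eq_of_le hxmn' with hlt | heq'
            · exact IH (G.dist x m') hlt m' rfl (by exact hmuv') (by
                show G.dist x x' + G.dist x' m' = G.dist x m'
                rw [hd1]; omega)
            · -- m' = y as well; then both x and y are medians of (u, v, x')
              have hm'y : m' = y := by
                apply hc.dist_eq_zero_iff.mp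
                have := dC G y m'; have := dC G x' m'; have := dC G x' y
                omega
              rw [hm'y] at hN3
              -- hN3 : d x' y + d y v = d x' v
              obtain ⟨z, -, hzuniq⟩ := hG.2 u v x'
              have ex : x = z := hzuniq x (by
                refine ⟨by simpa [gInterval] using hx, ?_, ?_⟩ <;>
                  simp only [gInterval, Set.mem_setOf_eq]
                · have := dC G v x; have := dC G x x'; have := dC G v x'; omega
                · have := dC G x' x; have := dC G x u; have := dC G x' u; omega)
              have ey : y = z := hzuniq y (by
                refine ⟨by simpa [gInterval] using hy, ?_, ?_⟩ <;>
                  simp only [gInterval, Set.mem_setOf_eq]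
                · have := dC G v y; have := dC G y x'; have := dC G v x'; omega
                · have := dC G x' y; have := dC G y u; have := dC G x' u; omega)
              have exy : x = y := ex.trans ey.symm
              have h0 : G.dist x y = 0 := by rw [exy]; exact SimpleGraph.dist_self
              omega

end Helpers

/-- In a median graph, every interval is convex. -/
theorem interval_convex {V : Type*} (G : SimpleGraph V) (hG : MedianGraph G)
    (u v : V) : GConvex G (gInterval G u v) := by
  have hc := hG.1
  intro a ha b hb w hw
  suffices H : ∀ n a, G.dist a w = n → a ∈ gInterval G u v → w ∈ gInterval G a b →
      w ∈ gInterval G u v from H _ a rfl ha hw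
  clear ha hw
  intro n
  induction n using Nat.strong_induction_on with
  | _ n IH =>
  intro a hn ha hw
  rcases Nat.eq_zero_or_pos n with h0 | hpos
  · have : a = w := hc.dist_eq_zero_iff.mp (by omega)
    rwa [← this]
  · obtain ⟨p, hp⟩ := hc.exists_walk_length_eq_dist a w
    cases p with
    | nil =>
      simp only [SimpleGraph.Walk.length_nil] at hp
      rw [SimpleGraph.dist_self] at hn
      omega
    | @cons _ a' _ hadj q =>
      have hlen : q.length + 1 = n := by
        have := hp
        simp only [SimpleGraph.Walk.length_cons] at this
        omega
      have hd1 : G.dist a a' = 1 := dist_eq_one_iff_adj.mpr hadj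
      have h1 : G.dist a' w ≤ q.length := dist_le q
      have h2 : G.dist a w ≤ G.dist a a' + G.dist a' w := hc.dist_triangle
      have hdw : G.dist a' w + 1 = n := by omega
      have ha'aw : a' ∈ gInterval G a w := by
        simp only [gInterval, Set.mem_setOf_eq]; omega
      have ha'ab : a' ∈ gInterval G a b := sub_left hc hw ha'aw
      have ha' : a' ∈ gInterval G u v :=
        crux hG u v a a' ha hadj (G.dist a b) b rfl hb ha'ab
      have hwa'b : w ∈ gInterval G a' b := by
        simp only [gInterval, Set.mem_setOf_eq] at hw ⊢
        have t1 : G.dist a b ≤ G.dist a a' + G.dist a' b := hc.dist_triangle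
        have t2 : G.dist a' b ≤ G.dist a' w + G.dist w b := hc.dist_triangle
        omega
      exact IH (G.dist a' w) (by omega) a' rfl ha' hwa'b
end

section
/- If a finite median graph G has n vertices, m edges, and dimension d (the largest d such that G contains an induced subgraph isomorphic to the hypercube Q_d), then m ≤ d·n and d·n ≤ n·log₂ n (for n ≥ 2). In particular, if G is a cube-free median graph then m ≤ 2n. -/
open SimpleGraph Set

/-!
Root the graph at a vertex `z`. Median graphs are bipartite, so every edge has exactly one
endpoint farther from `z`, and the number of edges is the sum over all vertices `x` of the
number of neighbours of `x` closer to `z`. These down-neighbours `u₁, …, u_k` of `x` span an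
induced `k`-cube: in the median semilattice rooted at `z` (where `x ⊓ y` is the median of
`x, y, z`) the meets `x ⊓ ⨅ i ∈ A, u i` realise `Q_k`, since two of them are at distance
`|A ∆ B|`. So every down-degree is at most `d`, whence `m ≤ d n`; and `2 ^ d ≤ n` because
`Q_d` has `2 ^ d` vertices.
-/

open scoped Finset

theorem card_edgeFinset_eq_sum_card_lt {V α : Type*} [Fintype V] [LinearOrder α]
    (G : SimpleGraph V) [DecidableRel G.Adj] [Fintype G.edgeSet] (f : V → α)
    (hf : ∀ ⦃a b⦄, G.Adj a b → f a ≠ f b) :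
    #G.edgeFinset = ∑ x, #{y | G.Adj x y ∧ f y < f x} := by
  rw [← Finset.card_sigma]
  symm
  refine Finset.card_bij (fun p _ => s(p.1, p.2)) ?_ ?_ ?_
  · rintro ⟨x, y⟩ h
    simp only [Finset.mem_sigma, Finset.mem_filter, Finset.mem_univ, true_and] at h
    simpa using h.1
  · rintro ⟨x, y⟩ h ⟨x', y'⟩ h' heq
    simp only [Finset.mem_sigma, Finset.mem_filter, Finset.mem_univ, true_and] at h h'
    rcases Sym2.eq_iff.mp heq with ⟨rfl, rfl⟩ | ⟨rfl, rfl⟩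
    · rfl
    · exact absurd h.2 h'.2.asymm
  · intro e he
    induction e using Sym2.ind with
    | h a b =>
      have hab : G.Adj a b := by simpa using he
      rcases (hf hab).lt_or_gt with h | h
      · exact ⟨⟨b, a⟩, by simpa using ⟨hab.symm, h⟩, Sym2.eq_swap⟩
      · exact ⟨⟨a, b⟩, by simpa using ⟨hab, h⟩, rfl⟩

theorem HasCubeIn.mono {V : Type*} {G : SimpleGraph V} {S : Set V} {d k : ℕ}
    (h : HasCubeIn G d S) (hk : k ≤ d) : HasCubeIn G k S := by
  obtain ⟨f, hf, hS, hadj⟩ := h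
  have hι : Function.Injective (Fin.castLE hk) := Fin.castLE_injective hk
  refine ⟨fun A => f (A.image (Fin.castLE hk)), fun A B h => ?_, fun A => hS _, fun A B => ?_⟩
  · exact Finset.image_injective hι (hf h)
  · rw [hadj, ← Finset.image_symmDiff _ _ hι, Finset.card_image_of_injective _ hι]

theorem HasCubeIn.le_log_card {V : Type*} [Fintype V] {G : SimpleGraph V} {S : Set V} {d : ℕ}
    (h : HasCubeIn G d S) : d ≤ Nat.log 2 (Fintype.card V) := by
  obtain ⟨f, hf, -, -⟩ := h
  refine Nat.le_log_of_pow_le one_lt_two ?_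
  simpa using Fintype.card_le_of_injective f hf

lemma mem_gInterval {V : Type*} {G : SimpleGraph V} {u v w : V} :
    w ∈ gInterval G u v ↔ G.dist u w + G.dist w v = G.dist u v := Iff.rfl

lemma gInterval_comm {V : Type*} (G : SimpleGraph V) (u v : V) :
    gInterval G u v = gInterval G v u := by
  ext w
  simp only [mem_gInterval, dist_comm (u := w), dist_comm (v := u)]
  omega

def IsDownNeighbor {V : Type*} (G : SimpleGraph V) (z x y : V) : Prop :=
  G.Adj x y ∧ G.dist z y + 1 = G.dist z x

lemma IsDownNeighbor.mem_gInterval {V : Type*} {G : SimpleGraph V} {z x y : V}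
    (h : IsDownNeighbor G z x y) : y ∈ gInterval G z x := by
  show G.dist z y + G.dist y x = G.dist z x
  rw [dist_eq_one_iff_adj.mpr h.1.symm]
  exact h.2

namespace MedianGraph

variable {V : Type*} {G : SimpleGraph V}

noncomputable def median (hG : MedianGraph G) (x y z : V) : V := (hG.2 x y z).choose

lemma median_mem (hG : MedianGraph G) (x y z : V) :
    hG.median x y z ∈ gInterval G x y ∧ hG.median x y z ∈ gInterval G y z ∧
      hG.median x y z ∈ gInterval G z x :=
  (hG.2 x y z).choose_spec.1

lemma eq_median (hG : MedianGraph G) {x y z m : V}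
    (h : m ∈ gInterval G x y ∧ m ∈ gInterval G y z ∧ m ∈ gInterval G z x) :
    m = hG.median x y z :=
  (hG.2 x y z).choose_spec.2 m h

lemma median_comm (hG : MedianGraph G) (x y z : V) : hG.median x y z = hG.median y x z := by
  obtain ⟨hxy, hyz, hzx⟩ := hG.median_mem x y z
  refine hG.eq_median ⟨?_, ?_, ?_⟩ <;> rw [gInterval_comm] <;> assumption

lemma dist_ne_of_adj_s5 (hG : MedianGraph G) (z : V) {a b : V} (hab : G.Adj a b) : G.dist z a ≠ G.dist z b := by
  intro heq
  obtain ⟨hm, hbz, hza⟩ := hG.median_mem a b z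
  simp only [mem_gInterval] at hm hbz hza
  rw [dist_eq_one_iff_adj.mpr hab] at hm
  obtain h | h : G.dist a (hG.median a b z) = 0 ∨ G.dist (hG.median a b z) b = 0 := by omega
  · rw [← hG.1.dist_eq_zero_iff.mp h, dist_eq_one_iff_adj.mpr hab.symm, dist_comm,
      dist_comm (u := b)] at hbz
    omega
  · rw [hG.1.dist_eq_zero_iff.mp h, dist_eq_one_iff_adj.mpr hab.symm] at hza
    omega

lemma dist_add_one_of_adj (hG : MedianGraph G) (z : V) {a b : V} (hab : G.Adj a b) :
    G.dist z a + 1 = G.dist z b ∨ G.dist z b + 1 = G.dist z a := by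
  have := hG.dist_ne_of_adj_s5 z hab
  rcases hab.diff_dist_adj (u := z) with h | h | h <;> omega

lemma dist_eq_two_of_isDownNeighbor (hG : MedianGraph G) {z x a b : V} (ha : IsDownNeighbor G z x a) (hb : IsDownNeighbor G z x b)
    (hab : a ≠ b) : G.dist a b = 2 := by
  have hax : G.dist a x = 1 := dist_eq_one_iff_adj.mpr ha.1.symm
  have hxb : G.dist x b = 1 := dist_eq_one_iff_adj.mpr hb.1
  have : G.dist a b ≤ G.dist a x + G.dist x b := hG.1.dist_triangle
  have : G.dist a b ≠ 0 := fun h => hab (hG.1.dist_eq_zero_iff.mp h)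
  have : G.dist a b ≠ 1 := fun h =>
    hG.dist_ne_of_adj_s5 z (dist_eq_one_iff_adj.mp h) (by have := ha.2; have := hb.2; omega)
  omega

noncomputable abbrev rootedSemilattice (hG : MedianGraph G) (z : V) : SemilatticeInf V where
  le x y := x ∈ gInterval G z y
  le_refl x := by simp [mem_gInterval]
  le_trans x y w hxy hyw := by
    have : G.dist z w ≤ G.dist z x + G.dist x w := hG.1.dist_triangle
    have : G.dist x w ≤ G.dist x y + G.dist y w := hG.1.dist_triangle
    simp only [mem_gInterval] at *
    omega
  le_antisymm x y hxy hyx := by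
    simp only [mem_gInterval] at hxy hyx
    exact hG.1.dist_eq_zero_iff.mp (by omega)
  inf x y := hG.median x y z
  inf_le_left x y := (hG.median_mem x y z).2.2
  inf_le_right x y := by
    rw [median_comm]
    exact (hG.median_mem y x z).2.2
  le_inf w x y hwx hwy := by
    -- `p := median x y w` is also the median of `x, y, z`, and `w ≤ p`.
    obtain ⟨hxy, hyw, hwx'⟩ := hG.median_mem x y w
    rw [gInterval_comm] at hyw
    set p := hG.median x y w
    have hwx : G.dist z w + G.dist w x = G.dist z x := hwx
    have hwy : G.dist z w + G.dist w y = G.dist z y := hwy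
    have : G.dist z x ≤ G.dist z p + G.dist p x := hG.1.dist_triangle
    have : G.dist z y ≤ G.dist z p + G.dist p y := hG.1.dist_triangle
    have : G.dist z p ≤ G.dist z w + G.dist w p := hG.1.dist_triangle
    simp only [mem_gInterval] at hyw hwx'
    have hp : p = hG.median x y z := hG.eq_median
      ⟨hxy, by rw [gInterval_comm, mem_gInterval]; omega, by rw [mem_gInterval]; omega⟩
    show w ∈ gInterval G z (hG.median x y z)
    rw [← hp, mem_gInterval]
    omega

lemma isDownNeighbor_median (hG : MedianGraph G) {z x a b : V} (ha : IsDownNeighbor G z x a)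
    (hb : IsDownNeighbor G z x b) (hab : a ≠ b) :
    IsDownNeighbor G z a (hG.median a b z) ∧ IsDownNeighbor G z b (hG.median a b z) := by
  obtain ⟨hab', hbz, hza⟩ := hG.median_mem a b z
  rw [gInterval_comm] at hbz
  simp only [mem_gInterval] at hab' hbz hza
  rw [dist_comm (u := a), hG.dist_eq_two_of_isDownNeighbor ha hb hab] at hab'
  have := ha.2
  have := hb.2
  have hwa : G.dist (hG.median a b z) a = 1 := by omega
  have hwb : G.dist (hG.median a b z) b = 1 := by omega
  exact ⟨⟨(dist_eq_one_iff_adj.mp hwa).symm, by omega⟩,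
    ⟨(dist_eq_one_iff_adj.mp hwb).symm, by omega⟩⟩

lemma eq_median_of_adj (hG : MedianGraph G) {a b c y : V} (hab : G.dist a b = 2)
    (hbc : G.dist b c = 2) (hca : G.dist c a = 2) (ha : G.Adj y a) (hb : G.Adj y b)
    (hc : G.Adj y c) : y = hG.median a b c := by
  have := dist_eq_one_iff_adj.mpr ha
  have := dist_eq_one_iff_adj.mpr ha.symm
  have := dist_eq_one_iff_adj.mpr hb
  have := dist_eq_one_iff_adj.mpr hb.symm
  have := dist_eq_one_iff_adj.mpr hc
  have := dist_eq_one_iff_adj.mpr hc.symm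
  exact hG.eq_median ⟨by rw [mem_gInterval]; omega, by rw [mem_gInterval]; omega,
    by rw [mem_gInterval]; omega⟩

/-- Otherwise `x` and `median a c z` would be two medians of `a, b, c`. -/
lemma eq_of_median_eq (hG : MedianGraph G) {z x a b c : V} (ha : IsDownNeighbor G z x a)
    (hb : IsDownNeighbor G z x b) (hc : IsDownNeighbor G z x c) (hac : a ≠ c) (hbc : b ≠ c)
    (h : hG.median a c z = hG.median b c z) : a = b := by
  by_contra hab
  obtain ⟨hya, hyc⟩ := hG.isDownNeighbor_median ha hc hac
  have hyb := (hG.isDownNeighbor_median hb hc hbc).1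
  rw [← h] at hyb
  have hca : G.dist c a = 2 := hG.dist_eq_two_of_isDownNeighbor hc ha hac.symm
  have hx := hG.eq_median_of_adj (hG.dist_eq_two_of_isDownNeighbor ha hb hab) (hG.dist_eq_two_of_isDownNeighbor hb hc hbc) hca
    ha.1 hb.1 hc.1
  have hy := hG.eq_median_of_adj (hG.dist_eq_two_of_isDownNeighbor ha hb hab) (hG.dist_eq_two_of_isDownNeighbor hb hc hbc) hca
    hya.1.symm hyb.1.symm hyc.1.symm
  have := hya.2
  rw [hy, ← hx] at this
  have := ha.2
  omega

noncomputable def cubeVertex (hG : MedianGraph G) (z v : V) {k : ℕ} (u : Fin k → V)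
    (A : Finset (Fin k)) : V :=
  letI := hG.rootedSemilattice z
  A.fold (· ⊓ ·) v u

section cubeVertex

variable (hG : MedianGraph G) (z v : V) {k : ℕ} (u : Fin k → V)

lemma mem_gInterval_cubeVertex_iff {A : Finset (Fin k)} {c : V} :
    c ∈ gInterval G z (hG.cubeVertex z v u A) ↔
      c ∈ gInterval G z v ∧ ∀ i ∈ A, c ∈ gInterval G z (u i) := by
  let := hG.rootedSemilattice z
  exact Finset.fold_op_rel_iff_and (r := fun a b : V => a ≤ b) le_inf_iff

lemma cubeVertex_union (A B : Finset (Fin k)) :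
    hG.cubeVertex z v u (A ∪ B) =
      hG.median (hG.cubeVertex z v u A) (hG.cubeVertex z v u B) z := by
  let := hG.rootedSemilattice z
  refine eq_of_forall_le_iff fun c => ?_
  change _ ↔ c ≤ hG.cubeVertex z v u A ⊓ hG.cubeVertex z v u B
  simp only [le_inf_iff]
  change c ∈ gInterval G z _ ↔ c ∈ gInterval G z _ ∧ c ∈ gInterval G z _
  simp only [mem_gInterval_cubeVertex_iff, Finset.forall_mem_union]
  tauto

lemma cubeVertex_insert_insert (A : Finset (Fin k)) (i j : Fin k) :
    hG.cubeVertex z v u (insert i (insert j A)) =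
      hG.median (hG.cubeVertex z v u (insert i A)) (hG.cubeVertex z v u (insert j A)) z := by
  rw [← cubeVertex_union, Finset.insert_union, Finset.union_insert, Finset.union_self]

variable {v u}

lemma cubeVertex_singleton (hv : ∀ i, IsDownNeighbor G z v (u i)) (i : Fin k) :
    hG.cubeVertex z v u {i} = u i := by
  let := hG.rootedSemilattice z
  exact (Finset.fold_singleton ..).trans (inf_eq_left.mpr (hv i).mem_gInterval)

lemma isDownNeighbor_cubeVertex_insert (hu : Function.Injective u)
    (hv : ∀ i, IsDownNeighbor G z v (u i)) (A : Finset (Fin k)) :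
    (∀ i ∉ A, IsDownNeighbor G z (hG.cubeVertex z v u A) (hG.cubeVertex z v u (insert i A))) ∧
      Set.InjOn (fun i => hG.cubeVertex z v u (insert i A)) (↑A)ᶜ := by
  induction A using Finset.induction_on with
  | empty =>
    simp only [Finset.insert_empty, hG.cubeVertex_singleton z hv, Finset.coe_empty,
      Set.compl_empty]
    exact ⟨fun i _ => by simpa [cubeVertex] using hv i, hu.injOn⟩
  | insert j A hjA ih =>
    obtain ⟨hdown, hinj⟩ := ih
    have hnot {i : Fin k} (hi : i ∉ insert j A) : i ∉ A ∧ i ≠ j := by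
      simp only [Finset.mem_insert, not_or] at hi
      exact hi.symm
    refine ⟨fun i hi => ?_, fun i hi i' hi' h => ?_⟩
    · obtain ⟨hiA, hij⟩ := hnot hi
      rw [hG.cubeVertex_insert_insert]
      exact (hG.isDownNeighbor_median (hdown i hiA) (hdown j hjA) (hinj.ne hiA hjA hij)).2
    · obtain ⟨hiA, hij⟩ := hnot hi
      obtain ⟨hi'A, hi'j⟩ := hnot hi'
      simp only [hG.cubeVertex_insert_insert] at h
      exact hinj hiA hi'A (hG.eq_of_median_eq (hdown i hiA) (hdown i' hi'A) (hdown j hjA)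
        (hinj.ne hiA hjA hij) (hinj.ne hi'A hjA hi'j) h)

lemma dist_cubeVertex (hu : Function.Injective u) (hv : ∀ i, IsDownNeighbor G z v (u i))
    (A : Finset (Fin k)) : G.dist z (hG.cubeVertex z v u A) + #A = G.dist z v := by
  induction A using Finset.induction_on with
  | empty => simp [cubeVertex]
  | insert j A hjA ih =>
    have := ((hG.isDownNeighbor_cubeVertex_insert z hu hv A).1 j hjA).2
    rw [Finset.card_insert_of_notMem hjA]
    omega

lemma dist_cubeVertex_cubeVertex (hu : Function.Injective u)
    (hv : ∀ i, IsDownNeighbor G z v (u i)) (A B : Finset (Fin k)) :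
    G.dist (hG.cubeVertex z v u A) (hG.cubeVertex z v u B) = #(symmDiff A B) := by
  obtain ⟨hAB, hBz, hzA⟩ := hG.median_mem (hG.cubeVertex z v u A) (hG.cubeVertex z v u B) z
  rw [gInterval_comm] at hBz
  rw [← cubeVertex_union] at hAB hBz hzA
  simp only [mem_gInterval] at hAB hBz hzA
  have := hG.dist_cubeVertex z hu hv A
  have := hG.dist_cubeVertex z hu hv B
  have := hG.dist_cubeVertex z hu hv (A ∪ B)
  have := Finset.card_union_add_card_inter A B
  rw [symmDiff_eq_sup_sdiff_inf, Finset.sup_eq_union, Finset.inf_eq_inter,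
    Finset.card_sdiff_of_subset Finset.inter_subset_union, ← hAB,
    dist_comm (u := hG.cubeVertex z v u A)]
  omega

end cubeVertex

theorem hasInducedCube_of_isDownNeighbor (hG : MedianGraph G) (z : V) {v : V} {k : ℕ}
    {u : Fin k → V} (hu : Function.Injective u) (hv : ∀ i, IsDownNeighbor G z v (u i)) :
    HasInducedCube G k := by
  refine ⟨hG.cubeVertex z v u, fun A B h => ?_, fun _ => Set.mem_univ _, fun A B => ?_⟩
  · have := hG.dist_cubeVertex_cubeVertex z hu hv A B
    rw [h, SimpleGraph.dist_self, eq_comm, Finset.card_eq_zero] at this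
    exact symmDiff_eq_bot.mp this
  · rw [← dist_eq_one_iff_adj, hG.dist_cubeVertex_cubeVertex z hu hv]

theorem hasInducedCube_card_lt [Fintype V] [DecidableRel G.Adj] (hG : MedianGraph G)
    (z x : V) : HasInducedCube G #{y | G.Adj x y ∧ G.dist z y < G.dist z x} := by
  set s : Finset V := {y | G.Adj x y ∧ G.dist z y < G.dist z x}
  refine hG.hasInducedCube_of_isDownNeighbor z (v := x) (u := fun i => (s.equivFin.symm i : V))
    (Subtype.val_injective.comp s.equivFin.symm.injective) fun i => ?_
  obtain ⟨hadj, hlt⟩ := (Finset.mem_filter.mp (s.equivFin.symm i).2).2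
  exact ⟨hadj, (hG.dist_add_one_of_adj z hadj).resolve_left (by omega)⟩

end MedianGraph

/-- Edge bound for median graphs: a finite median graph with `n` vertices, `m` edges
and dimension `d` satisfies `m ≤ d·n`, and `d·n ≤ n·log₂ n` for `n ≥ 2`; in
particular `m ≤ 2n` when the graph is cube-free. -/
theorem median_edge_bound (V : Type*) [Fintype V] (G : SimpleGraph V)
    [Fintype G.edgeSet] (hG : MedianGraph G) (d : ℕ)
    (hd : HasInducedCube G d) (hmax : ∀ d' : ℕ, HasInducedCube G d' → d' ≤ d) :
    G.edgeFinset.card ≤ d * Fintype.card V ∧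
    (2 ≤ Fintype.card V →
      d * Fintype.card V ≤ Fintype.card V * Nat.log 2 (Fintype.card V)) ∧
    (CubeFree G → G.edgeFinset.card ≤ 2 * Fintype.card V) := by
  classical
  obtain ⟨z⟩ := hG.1.nonempty
  have hedges : #G.edgeFinset ≤ d * Fintype.card V :=
    calc #G.edgeFinset
        = ∑ x, #{y | G.Adj x y ∧ G.dist z y < G.dist z x} :=
          card_edgeFinset_eq_sum_card_lt G (G.dist z) fun _ _ => hG.dist_ne_of_adj_s5 z
      _ ≤ ∑ _x : V, d := Finset.sum_le_sum fun x _ => hmax _ (hG.hasInducedCube_card_lt z x)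
      _ = d * Fintype.card V := by simp [mul_comm]
  refine ⟨hedges, fun _ => ?_, fun hcf => hedges.trans ?_⟩
  · rw [mul_comm]
    exact Nat.mul_le_mul_left _ hd.le_log_card
  · exact Nat.mul_le_mul_right _ (not_lt.mp fun h3 => hcf (hd.mono h3))
end

section
/- For any gated set H of vertices of a median graph G and any x ∈ H, the fiber F(x) = {v : x is the gate of v in H} is a gated set of vertices of G. -/
open SimpleGraph Set

section FiberGatedProof

variable {V : Type*} {G : SimpleGraph V}

/-- Existence part of the median property, stated with distances. -/
private lemma med_ex (hG : MedianGraph G) (x y z : V) :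
    ∃ m : V, G.dist x m + G.dist m y = G.dist x y ∧
      G.dist y m + G.dist m z = G.dist y z ∧
      G.dist z m + G.dist m x = G.dist z x := by
  obtain ⟨m, hm, -⟩ := hG.2 x y z
  exact ⟨m, hm.1, hm.2.1, hm.2.2⟩

/-- For adjacent `x, y`, every vertex is strictly closer to one of them, by exactly 1. -/
private lemma dist_dichotomy (hG : MedianGraph G) {x y : V} (hxy : G.Adj x y) (w : V) :
    G.dist w y = G.dist w x + 1 ∨ G.dist w x = G.dist w y + 1 := by
  have hc := hG.1
  have hd1 : G.dist x y = 1 := SimpleGraph.dist_eq_one_iff_adj.mpr hxy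
  obtain ⟨m, h1, h2, h3⟩ := med_ex hG w x y
  rw [hd1] at h2
  have hz : G.dist x m = 0 ∨ G.dist m y = 0 := by omega
  rcases hz with hz | hz
  · have hm : x = m := hc.dist_eq_zero_iff.mp hz
    subst hm
    left
    have c1 : G.dist y x = 1 := by rw [SimpleGraph.dist_comm]; exact hd1
    have c2 : G.dist y w = G.dist w y := SimpleGraph.dist_comm
    have c3 : G.dist x w = G.dist w x := SimpleGraph.dist_comm
    omega
  · have hm : m = y := hc.dist_eq_zero_iff.mp hz
    right
    have c1 : G.dist y x = 1 := by rw [SimpleGraph.dist_comm]; exact hd1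
    rw [hm] at h1
    omega

/-- An interval from a fiber element to the gate stays in the fiber. -/
private lemma interval_to_gate_subset_fiber (hc : G.Connected) {H : Set V} {x : V}
    {a m : V} (ha : a ∈ fiber G H x) (hm : G.dist a m + G.dist m x = G.dist a x) :
    m ∈ fiber G H x := by
  refine ⟨ha.1, fun u hu => ?_⟩
  have h1 : G.dist a u = G.dist a x + G.dist x u := ha.2 u hu
  have h2 : G.dist a u ≤ G.dist a m + G.dist m u := hc.dist_triangle
  have h3 : G.dist m u ≤ G.dist m x + G.dist x u := hc.dist_triangle
  omega

/-- Gated sets are convex. -/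
private lemma gated_convex (hc : G.Connected) {H : Set V} (hH : Gated G H)
    {u w z : V} (hu : u ∈ H) (hw : w ∈ H)
    (hz : G.dist u z + G.dist z w = G.dist u w) : z ∈ H := by
  obtain ⟨t, htH, ht⟩ := hH z
  have h1 : G.dist z u = G.dist z t + G.dist t u := ht u hu
  have h2 : G.dist z w = G.dist z t + G.dist t w := ht w hw
  have h3 : G.dist u w ≤ G.dist u t + G.dist t w := hc.dist_triangle
  have c1 : G.dist u z = G.dist z u := SimpleGraph.dist_comm
  have c2 : G.dist u t = G.dist t u := SimpleGraph.dist_comm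
  have hzt : G.dist z t = 0 := by omega
  have : z = t := hc.dist_eq_zero_iff.mp hzt
  rw [this]; exact htH

/-- A first step along a geodesic. -/
private lemma exists_step (hc : G.Connected) {x g : V} (hne : x ≠ g) :
    ∃ y, G.Adj x y ∧ G.dist x y = 1 ∧ G.dist x y + G.dist y g = G.dist x g := by
  obtain ⟨p, hp⟩ := hc.exists_walk_length_eq_dist x g
  cases p with
  | nil => exact absurd rfl hne
  | cons h q =>
    rename_i y
    have hd1 : G.dist x y = 1 := SimpleGraph.dist_eq_one_iff_adj.mpr h
    have h1 : G.dist y g ≤ q.length := SimpleGraph.dist_le q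
    have h2 : G.dist x g ≤ G.dist x y + G.dist y g := hc.dist_triangle
    have hlen : q.length + 1 = G.dist x g := by simpa using hp
    exact ⟨y, h, hd1, by omega⟩

/-- Key step for halfspace convexity: a minimal "bad" vertex lies on a geodesic to `y`. -/
private lemma min_bad_on_geodesic (hG : MedianGraph G) {x y : V} (hxy : G.Adj x y)
    {a b w : V}
    (hmin : ∀ z, G.dist a z + G.dist z b = G.dist a b → G.dist z x = G.dist z y + 1 →
      G.dist w y ≤ G.dist z y)
    (hwI : G.dist a w + G.dist w b = G.dist a b)
    (hwbad : G.dist w x = G.dist w y + 1) :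
    G.dist a w + G.dist w y = G.dist a y := by
  have hc := hG.1
  obtain ⟨m, h1, h2, h3⟩ := med_ex hG a w y
  have cwm : G.dist w m = G.dist m w := SimpleGraph.dist_comm
  rcases dist_dichotomy hG hxy m with hgood | hbad
  · -- m on the x side: contradiction with w bad
    exfalso
    have tri : G.dist w x ≤ G.dist w m + G.dist m x := hc.dist_triangle
    omega
  · -- m is also bad; by minimality m = w
    have hmI : G.dist a m + G.dist m b = G.dist a b := by
      have t1 : G.dist m b ≤ G.dist m w + G.dist w b := hc.dist_triangle
      have t2 : G.dist a b ≤ G.dist a m + G.dist m b := hc.dist_triangle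
      omega
    have hmin' := hmin m hmI hbad
    have hwm : G.dist w m = 0 := by omega
    have : w = m := hc.dist_eq_zero_iff.mp hwm
    subst this
    have c1 : G.dist y w = G.dist w y := SimpleGraph.dist_comm
    have c2 : G.dist y a = G.dist a y := SimpleGraph.dist_comm
    have c3 : G.dist w a = G.dist a w := SimpleGraph.dist_comm
    omega

/-- Halfspace convexity in a median graph. -/
private lemma halfspace_convex (hG : MedianGraph G) {x y a b : V} (hxy : G.Adj x y)
    (ha : G.dist a y = G.dist a x + 1) (hb : G.dist b y = G.dist b x + 1)
    {w : V} (hw : G.dist a w + G.dist w b = G.dist a b) :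
    G.dist w y = G.dist w x + 1 := by
  have hc := hG.1
  by_contra hcon
  have hwbad0 : G.dist w x = G.dist w y + 1 :=
    (dist_dichotomy hG hxy w).resolve_left hcon
  set D : Set ℕ := {n | ∃ z, (G.dist a z + G.dist z b = G.dist a b ∧
      G.dist z x = G.dist z y + 1) ∧ G.dist z y = n} with hDdef
  have hDne : D.Nonempty := ⟨G.dist w y, w, ⟨hw, hwbad0⟩, rfl⟩
  obtain ⟨w₀, ⟨hw₀I, hw₀bad⟩, hw₀y⟩ := Nat.sInf_mem hDne
  have hmin : ∀ z, G.dist a z + G.dist z b = G.dist a b → G.dist z x = G.dist z y + 1 →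
      G.dist w₀ y ≤ G.dist z y := by
    intro z hz1 hz2
    rw [hw₀y]
    exact Nat.sInf_le ⟨z, ⟨hz1, hz2⟩, rfl⟩
  have hay : G.dist a w₀ + G.dist w₀ y = G.dist a y :=
    min_bad_on_geodesic hG hxy hmin hw₀I hw₀bad
  have hby : G.dist b w₀ + G.dist w₀ y = G.dist b y := by
    have hmin' : ∀ z, G.dist b z + G.dist z a = G.dist b a → G.dist z x = G.dist z y + 1 →
        G.dist w₀ y ≤ G.dist z y := by
      intro z hz1 hz2
      have c1 : G.dist b z = G.dist z b := SimpleGraph.dist_comm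
      have c2 : G.dist z a = G.dist a z := SimpleGraph.dist_comm
      have c3 : G.dist b a = G.dist a b := SimpleGraph.dist_comm
      exact hmin z (by omega) hz2
    have hw₀I' : G.dist b w₀ + G.dist w₀ a = G.dist b a := by
      have c1 : G.dist b w₀ = G.dist w₀ b := SimpleGraph.dist_comm
      have c2 : G.dist w₀ a = G.dist a w₀ := SimpleGraph.dist_comm
      have c3 : G.dist b a = G.dist a b := SimpleGraph.dist_comm
      omega
    exact min_bad_on_geodesic hG hxy hmin' hw₀I' hw₀bad
  -- the median m of (a, b, x) is on the x side
  obtain ⟨m, m1, m2, m3⟩ := med_ex hG a b x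
  -- m1 : d a m + d m b = d a b ; m2 : d b m + d m x = d b x ; m3 : d x m + d m a = d x a
  have cxm : G.dist x m = G.dist m x := SimpleGraph.dist_comm
  have cma : G.dist m a = G.dist a m := SimpleGraph.dist_comm
  have cxa : G.dist x a = G.dist a x := SimpleGraph.dist_comm
  have hmx : G.dist m y = G.dist m x + 1 := by
    rcases dist_dichotomy hG hxy m with h | h
    · exact h
    · exfalso
      have tri : G.dist a y ≤ G.dist a m + G.dist m y := hc.dist_triangle
      omega
  -- both m and w₀ are medians of (a, b, y); uniqueness forces w₀ = m, a contradiction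
  obtain ⟨mu, -, huniq⟩ := hG.2 a b y
  have hmmed : m ∈ gInterval G a b ∧ m ∈ gInterval G b y ∧ m ∈ gInterval G y a := by
    refine ⟨m1, ?_, ?_⟩
    · show G.dist b m + G.dist m y = G.dist b y
      omega
    · show G.dist y m + G.dist m a = G.dist y a
      have c1 : G.dist y m = G.dist m y := SimpleGraph.dist_comm
      have c2 : G.dist y a = G.dist a y := SimpleGraph.dist_comm
      omega
  have hwmed : w₀ ∈ gInterval G a b ∧ w₀ ∈ gInterval G b y ∧ w₀ ∈ gInterval G y a := by
    refine ⟨hw₀I, hby, ?_⟩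
    show G.dist y w₀ + G.dist w₀ a = G.dist y a
    have c1 : G.dist y w₀ = G.dist w₀ y := SimpleGraph.dist_comm
    have c2 : G.dist y a = G.dist a y := SimpleGraph.dist_comm
    have c3 : G.dist w₀ a = G.dist a w₀ := SimpleGraph.dist_comm
    omega
  have : w₀ = m := (huniq w₀ hwmed).trans (huniq m hmmed).symm
  subst this
  omega

/-- Fibers of gated sets are convex. -/
private lemma fiber_convex (hG : MedianGraph G) {H : Set V} (hH : Gated G H)
    {x : V} (hx : x ∈ H) {a b w : V}
    (ha : a ∈ fiber G H x) (hb : b ∈ fiber G H x)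
    (hw : G.dist a w + G.dist w b = G.dist a b) : w ∈ fiber G H x := by
  have hc := hG.1
  obtain ⟨g, hgH, hg⟩ := hH w
  by_cases hgx : g = x
  · subst hgx; exact ⟨hx, hg⟩
  · exfalso
    obtain ⟨y, hadj, hd1, hstep⟩ := exists_step hc (fun h => hgx h.symm)
    have hyH : y ∈ H := gated_convex hc hH hx hgH hstep
    have hay : G.dist a y = G.dist a x + 1 := by
      have h := ha.2 y hyH
      have h' := ha.2 x hx
      have hx0 : G.dist x x = 0 := SimpleGraph.dist_self
      omega
    have hby : G.dist b y = G.dist b x + 1 := by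
      have h := hb.2 y hyH
      have h' := hb.2 x hx
      have hx0 : G.dist x x = 0 := SimpleGraph.dist_self
      omega
    have hwx : G.dist w x = G.dist w g + G.dist g x := hg x hx
    have hwy : G.dist w y = G.dist w g + G.dist g y := hg y hyH
    have hconc : G.dist w y = G.dist w x + 1 := halfspace_convex hG hadj hay hby hw
    have c1 : G.dist g x = G.dist x g := SimpleGraph.dist_comm
    have c2 : G.dist g y = G.dist y g := SimpleGraph.dist_comm
    omega

end FiberGatedProof

/-- In a median graph, the fibers of any gated set are gated. -/
theorem fiber_gated {V : Type*} (G : SimpleGraph V) (hG : MedianGraph G)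
    (H : Set V) (hH : Gated G H) (x : V) (hx : x ∈ H) :
    Gated G (fiber G H x) := by
  have hc := hG.1
  have hxF : x ∈ fiber G H x := by
    refine ⟨hx, fun u hu => ?_⟩
    rw [SimpleGraph.dist_self, zero_add]
  intro v
  set D : Set ℕ := {n | ∃ z, z ∈ fiber G H x ∧ G.dist v z = n} with hDdef
  have hDne : D.Nonempty := ⟨G.dist v x, x, hxF, rfl⟩
  obtain ⟨s, hsF, hsv⟩ := Nat.sInf_mem hDne
  refine ⟨s, hsF, fun u hu => ?_⟩
  obtain ⟨m, h1, h2, h3⟩ := med_ex hG v s u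
  -- h1 : d v m + d m s = d v s ; h2 : d s m + d m u = d s u ; h3 : d u m + d m v = d u v
  have hmF : m ∈ fiber G H x := fiber_convex hG hH hx hsF hu h2
  have hmin : G.dist v s ≤ G.dist v m := by
    rw [hsv]; exact Nat.sInf_le ⟨m, hmF, rfl⟩
  have hms : G.dist m s = 0 := by omega
  have : m = s := hc.dist_eq_zero_iff.mp hms
  subst this
  have c1 : G.dist u m = G.dist m u := SimpleGraph.dist_comm
  have c2 : G.dist m v = G.dist v m := SimpleGraph.dist_comm
  have c3 : G.dist u v = G.dist v u := SimpleGraph.dist_comm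
  omega
end

section
/- For any edge uv of a median graph G, the sets W(u,v) = {z : d_G(z,u) < d_G(z,v)} and W(v,u) = {z : d_G(z,v) < d_G(z,u)} are gated and form a pair of complementary halfspaces of G. Conversely, any pair of complementary halfspaces of G (a partition of the vertex set into two convex sets) has the form {W(u,v), W(v,u)} for some edge uv of G. -/
open SimpleGraph Set

namespace MedianAux

variable {V : Type*} {G : SimpleGraph V}

lemma mem_int {x y w : V} :
    w ∈ gInterval G x y ↔ G.dist x w + G.dist w y = G.dist x y := Iff.rfl

lemma int_comm {x y w : V} (h : w ∈ gInterval G x y) : w ∈ gInterval G y x := by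
  simp only [mem_int] at *
  rw [SimpleGraph.dist_comm (u:=y) (v:=w), SimpleGraph.dist_comm (u:=w) (v:=x),
    SimpleGraph.dist_comm (u:=y) (v:=x)]
  omega

/-- For an edge `uv` of a median graph, every vertex is strictly closer to one
endpoint than the other, with distance difference exactly one. -/
lemma parity (hG : MedianGraph G) {u v : V} (huv : G.Adj u v) (z : V) :
    G.dist z v = G.dist z u + 1 ∨ G.dist z u = G.dist z v + 1 := by
  obtain ⟨m, ⟨h1, h2, h3⟩, -⟩ := hG.2 u v z
  have hd : G.dist u v = 1 := SimpleGraph.dist_eq_one_iff_adj.mpr huv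
  simp only [mem_int] at h1 h2 h3
  rw [hd] at h1
  have h0 : G.dist u m = 0 ∨ G.dist m v = 0 := by omega
  rcases h0 with h0 | h0
  · have : u = m := (hG.1.dist_eq_zero_iff).mp h0
    subst this
    left
    have c1 : G.dist v u = 1 := by rw [SimpleGraph.dist_comm]; exact hd
    have c2 : G.dist v z = G.dist z v := SimpleGraph.dist_comm
    have c3 : G.dist u z = G.dist z u := SimpleGraph.dist_comm
    omega
  · have hmv : m = v := (hG.1.dist_eq_zero_iff).mp h0
    rw [hmv] at h3
    right
    have c1 : G.dist v u = 1 := by rw [SimpleGraph.dist_comm]; exact hd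
    omega

lemma good_eq (hG : MedianGraph G) {u v : V} (huv : G.Adj u v) {z : V}
    (hz : G.dist z u < G.dist z v) : G.dist z v = G.dist z u + 1 := by
  rcases parity hG huv z with h | h
  · exact h
  · omega

lemma subInt (hc : G.Connected) {x y w m : V} (hw : w ∈ gInterval G x y)
    (hm : m ∈ gInterval G x w) : m ∈ gInterval G x y ∧ w ∈ gInterval G m y := by
  simp only [mem_int] at *
  have t1 : G.dist m y ≤ G.dist m w + G.dist w y := hc.dist_triangle
  have t2 : G.dist x y ≤ G.dist x m + G.dist m y := hc.dist_triangle
  omega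

lemma goodInt (hG : MedianGraph G) {u v : V} (huv : G.Adj u v) {z s : V}
    (hz : G.dist z u < G.dist z v) (hs : s ∈ gInterval G z u) :
    G.dist s u < G.dist s v := by
  rcases parity hG huv s with h | h
  · omega
  · exfalso
    simp only [mem_int] at hs
    have t1 : G.dist z v ≤ G.dist z s + G.dist s v := hG.1.dist_triangle
    have hz' := good_eq hG huv hz
    omega

/-- Endgame of the convexity proof: an impossible local configuration, ruled out
by the uniqueness of medians. -/
lemma endgame (hG : MedianGraph G) {u v x y w : V} (huv : G.Adj u v)
    (hx : G.dist x u < G.dist x v) (hy : G.dist y u < G.dist y v)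
    (hw : G.dist w v < G.dist w u)
    (hxw1 : G.dist x w = 1) (hwy1 : G.dist w y = 1) (hxy2 : G.dist x y = 2)
    (hdxu : G.dist w u = G.dist x u + 1) (hdyu : G.dist y u = G.dist x u) :
    False := by
  have hc := hG.1
  have px : G.dist x v = G.dist x u + 1 := good_eq hG huv hx
  have py : G.dist y v = G.dist y u + 1 := good_eq hG huv hy
  have pw : G.dist w u = G.dist w v + 1 := good_eq hG huv.symm hw
  have c1 : G.dist w x = G.dist x w := SimpleGraph.dist_comm
  have hwI : w ∈ gInterval G x y := mem_int.mpr (by omega)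
  obtain ⟨t, ⟨r1, r2, r3⟩, -⟩ := hG.2 x y u
  have htgood : G.dist t u < G.dist t v := goodInt hG huv hx (int_comm r3)
  have r1e := mem_int.mp r1
  have htx : t ≠ x := by
    intro he
    rw [he] at r2
    have h2 := mem_int.mp r2
    have c6 : G.dist y x = G.dist x y := SimpleGraph.dist_comm
    omega
  have hty : t ≠ y := by
    intro he
    rw [he] at r3
    have h3 := mem_int.mp r3
    have c6 : G.dist y x = G.dist x y := SimpleGraph.dist_comm
    have c7 : G.dist u y = G.dist y u := SimpleGraph.dist_comm
    have c8 : G.dist u x = G.dist x u := SimpleGraph.dist_comm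
    omega
  have hxt0 : G.dist x t ≠ 0 := fun h0 => htx (((hc.dist_eq_zero_iff).mp h0).symm)
  have hty0 : G.dist t y ≠ 0 := fun h0 => hty ((hc.dist_eq_zero_iff).mp h0)
  have hxt1 : G.dist x t = 1 := by omega
  have hty1 : G.dist t y = 1 := by omega
  have r3e := mem_int.mp (int_comm r3)
  have pt : G.dist t v = G.dist t u + 1 := good_eq hG huv htgood
  have htw : t ≠ w := by
    intro he
    rw [he] at htgood
    omega
  have hwt2 : G.dist w t = 2 := by
    have tri : G.dist w t ≤ G.dist w x + G.dist x t := hc.dist_triangle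
    have hne1 : G.dist w t ≠ 1 := by
      intro h1
      have hadj : G.Adj w t := SimpleGraph.dist_eq_one_iff_adj.mp h1
      rcases parity hG hadj x with h | h
      · omega
      · omega
    have h0 : G.dist w t ≠ 0 := fun h0 => htw (((hc.dist_eq_zero_iff).mp h0).symm)
    omega
  -- the median of (w, t, v)
  obtain ⟨h, ⟨s1, s2, s3⟩, -⟩ := hG.2 w t v
  have s1e := mem_int.mp s1
  have s2e := mem_int.mp s2
  have s3e := mem_int.mp s3
  have c9 : G.dist t h = G.dist h t := SimpleGraph.dist_comm
  have c10 : G.dist v h = G.dist h v := SimpleGraph.dist_comm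
  have c11 : G.dist h w = G.dist w h := SimpleGraph.dist_comm
  have c12 : G.dist v w = G.dist w v := SimpleGraph.dist_comm
  have hwh1 : G.dist w h = 1 := by omega
  have hht1 : G.dist h t = 1 := by omega
  have hbadh : G.dist h v < G.dist h u := goodInt hG huv.symm hw (int_comm s3)
  have hxh : G.dist x h = 2 := by
    have tri : G.dist x h ≤ G.dist x w + G.dist w h := hc.dist_triangle
    have hne1 : G.dist x h ≠ 1 := by
      intro h1
      have hadj : G.Adj x h := SimpleGraph.dist_eq_one_iff_adj.mp h1
      rcases parity hG hadj w with hp | hp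
      · omega
      · omega
    have hne0 : G.dist x h ≠ 0 := by
      intro h0
      have hxh' : x = h := (hc.dist_eq_zero_iff).mp h0
      rw [← hxh'] at hbadh
      omega
    omega
  have hyh : G.dist y h = 2 := by
    have tri : G.dist y h ≤ G.dist y w + G.dist w h := hc.dist_triangle
    have c13 : G.dist y w = G.dist w y := SimpleGraph.dist_comm
    have hne1 : G.dist y h ≠ 1 := by
      intro h1
      have hadj : G.Adj y h := SimpleGraph.dist_eq_one_iff_adj.mp h1
      rcases parity hG hadj w with hp | hp
      · omega
      · omega
    have hne0 : G.dist y h ≠ 0 := by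
      intro h0
      have hyh' : y = h := (hc.dist_eq_zero_iff).mp h0
      rw [← hyh'] at hbadh
      omega
    omega
  -- both `w` and `t` are medians of (x, y, h): contradiction with uniqueness
  obtain ⟨c, -, hcu⟩ := hG.2 x y h
  have c13 : G.dist y w = G.dist w y := SimpleGraph.dist_comm
  have c14 : G.dist h x = G.dist x h := SimpleGraph.dist_comm
  have c15 : G.dist h y = G.dist y h := SimpleGraph.dist_comm
  have c16 : G.dist y t = G.dist t y := SimpleGraph.dist_comm
  have c17 : G.dist t x = G.dist x t := SimpleGraph.dist_comm
  have hw_is : w = c := hcu w ⟨hwI, mem_int.mpr (by omega), mem_int.mpr (by omega)⟩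
  have ht_is : t = c := hcu t ⟨r1, mem_int.mpr (by omega), mem_int.mpr (by omega)⟩
  exact htw (ht_is.trans hw_is.symm)

set_option maxHeartbeats 1000000 in
/-- The key convexity statement: no vertex of `W(v,u)` lies on an interval between
two vertices of `W(u,v)`. Proved by strong induction on `d(x,y)` via a minimal
counterexample analysis using unique medians. -/
lemma noCross (hG : MedianGraph G) : ∀ n : ℕ, ∀ u v x y w : V, G.Adj u v →
    G.dist x u < G.dist x v → G.dist y u < G.dist y v → G.dist w v < G.dist w u →
    w ∈ gInterval G x y → G.dist x y = n → False := by
  intro n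
  induction n using Nat.strong_induction_on with
  | _ n IH =>
  intro u v x y w huv hx hy hw hwI hn
  have hc := hG.1
  -- Step 1: in any counterexample at the minimal level `n`, `x' ∈ I(w',u)`.
  have step1 : ∀ x' y' w' : V, G.dist x' u < G.dist x' v → G.dist y' u < G.dist y' v →
      G.dist w' v < G.dist w' u → w' ∈ gInterval G x' y' → G.dist x' y' = n →
      x' ∈ gInterval G w' u := by
    intro x' y' w' hx' hy' hw' hwI' hn'
    obtain ⟨m, ⟨hm1, hm2, hm3⟩, -⟩ := hG.2 x' w' u
    have hmgood : G.dist m u < G.dist m v := goodInt hG huv hx' (int_comm hm3)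
    obtain ⟨hmxy, hwmy⟩ := subInt hc hwI' hm1
    by_cases hmx : m = x'
    · rw [← hmx]; exact hm2
    · exfalso
      have hxm0 : G.dist x' m ≠ 0 := fun h0 => hmx (((hc.dist_eq_zero_iff).mp h0).symm)
      have hlt : G.dist m y' < n := by
        have hmm := mem_int.mp hmxy
        omega
      exact IH _ hlt u v m y' w' huv hmgood hy' hw' hwmy rfl
  have hxw : x ∈ gInterval G w u := step1 x y w hx hy hw hwI hn
  have hyw : y ∈ gInterval G w u := step1 y x w hy hx hw (int_comm hwI)
    (by rw [SimpleGraph.dist_comm]; exact hn)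
  -- the median of (w, x, v)
  obtain ⟨m, ⟨q1, q2, q3⟩, -⟩ := hG.2 w x v
  obtain ⟨hmI, hwmy⟩ := subInt hc hwI (int_comm q1)
  have hmbad : G.dist m v < G.dist m u := by
    rcases parity hG huv m with hgood | hbad
    · exfalso
      have hmgood : G.dist m u < G.dist m v := by omega
      have hmx : m ≠ x := by
        intro he
        rw [he] at q3
        have := goodInt hG huv.symm hw (int_comm q3)
        omega
      have hxm0 : G.dist x m ≠ 0 := fun h0 => hmx (((hc.dist_eq_zero_iff).mp h0).symm)
      have hlt : G.dist m y < n := by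
        have hmm := mem_int.mp hmI
        omega
      exact IH _ hlt u v m y w huv hmgood hy hw hwmy rfl
    · omega
  -- the median of (w, y, v)
  obtain ⟨m', ⟨q1', q2', q3'⟩, -⟩ := hG.2 w y v
  obtain ⟨hmI', hwmy'⟩ := subInt hc (int_comm hwI) (int_comm q1')
  have hmbad' : G.dist m' v < G.dist m' u := by
    rcases parity hG huv m' with hgood | hbad
    · exfalso
      have hmgood : G.dist m' u < G.dist m' v := by omega
      have hmy : m' ≠ y := by
        intro he
        rw [he] at q3'
        have := goodInt hG huv.symm hw (int_comm q3')
        omega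
      have hym0 : G.dist y m' ≠ 0 := fun h0 => hmy (((hc.dist_eq_zero_iff).mp h0).symm)
      have hlt : G.dist x m' < n := by
        have h1 := mem_int.mp hmI'
        have c1 : G.dist m' x = G.dist x m' := SimpleGraph.dist_comm
        have c2 : G.dist y x = G.dist x y := SimpleGraph.dist_comm
        omega
      exact IH _ hlt u v x m' w huv hx hmgood hw (int_comm hwmy') rfl
    · omega
  have hmIxy : m ∈ gInterval G x y := hmI
  have hmIxy' : m' ∈ gInterval G x y := int_comm hmI'
  have hxm : x ∈ gInterval G m u := step1 x y m hx hy hmbad hmIxy hn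
  have hym : y ∈ gInterval G m u := step1 y x m hy hx hmbad (int_comm hmIxy)
    (by rw [SimpleGraph.dist_comm]; exact hn)
  have hxm' : x ∈ gInterval G m' u := step1 x y m' hx hy hmbad' hmIxy' hn
  have hym' : y ∈ gInterval G m' u := step1 y x m' hy hx hmbad' (int_comm hmIxy')
    (by rw [SimpleGraph.dist_comm]; exact hn)
  -- unfold all interval memberships into distance equations
  have e1 := mem_int.mp hwI
  have e2 := mem_int.mp hxw
  have e3 := mem_int.mp hyw
  have e4 := mem_int.mp q2
  have e5 := mem_int.mp hxm
  have e6 := mem_int.mp hym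
  have e7 := mem_int.mp hmIxy
  have e8 := mem_int.mp q2'
  have e9 := mem_int.mp hxm'
  have e10 := mem_int.mp hym'
  have e11 := mem_int.mp hmIxy'
  have px : G.dist x v = G.dist x u + 1 := good_eq hG huv hx
  have py : G.dist y v = G.dist y u + 1 := good_eq hG huv hy
  have pmu : G.dist m u = G.dist m v + 1 := good_eq hG huv.symm hmbad
  have pmu' : G.dist m' u = G.dist m' v + 1 := good_eq hG huv.symm hmbad'
  have pw : G.dist w u = G.dist w v + 1 := good_eq hG huv.symm hw
  have c1 : G.dist w x = G.dist x w := SimpleGraph.dist_comm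
  have c2 : G.dist m x = G.dist x m := SimpleGraph.dist_comm
  have c3 : G.dist m' x = G.dist x m' := SimpleGraph.dist_comm
  have c4 : G.dist m' y = G.dist y m' := SimpleGraph.dist_comm
  have c5 : G.dist m y = G.dist y m := SimpleGraph.dist_comm
  have hxy2 : G.dist x y = 2 := by omega
  have hxw1 : G.dist x w = 1 := by omega
  have hwy1 : G.dist w y = 1 := by omega
  have hdxu : G.dist w u = G.dist x u + 1 := by omega
  have hdyu : G.dist y u = G.dist x u := by omega
  exact endgame hG huv hx hy hw hxw1 hwy1 hxy2 hdxu hdyu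

lemma convexW (hG : MedianGraph G) {u v : V} (huv : G.Adj u v) :
    GConvex G (halfspaceW G u v) := by
  intro p hp q hq w hw
  simp only [halfspaceW, Set.mem_setOf_eq] at hp hq ⊢
  by_contra hbad
  push_neg at hbad
  have hwbad : G.dist w v < G.dist w u := by
    rcases parity hG huv w with h | h <;> omega
  exact noCross hG (G.dist p q) u v p q w huv hp hq hwbad hw rfl

lemma complW (hG : MedianGraph G) {u v : V} (huv : G.Adj u v) :
    halfspaceW G v u = (halfspaceW G u v)ᶜ := by
  ext z
  simp only [halfspaceW, Set.mem_setOf_eq, Set.mem_compl_iff, not_lt]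
  constructor
  · intro h; omega
  · intro h
    rcases parity hG huv z with h1 | h1 <;> omega

lemma gated_of_convex (hG : MedianGraph G) {S : Set V} (hne : S.Nonempty)
    (hconv : GConvex G S) : Gated G S := by
  intro z
  have hTne : ((fun g => G.dist z g) '' S).Nonempty := hne.image _
  obtain ⟨g, hgS, hgd⟩ := Nat.sInf_mem hTne
  refine ⟨g, hgS, fun t ht => ?_⟩
  obtain ⟨c, ⟨o1, o2, o3⟩, -⟩ := hG.2 z g t
  have hcS : c ∈ S := hconv g hgS t ht o2
  have ho1 := mem_int.mp o1
  have hmin : G.dist z g ≤ G.dist z c :=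
    le_trans (le_of_eq hgd) (Nat.sInf_le ⟨c, hcS, rfl⟩)
  have hcg : G.dist c g = 0 := by omega
  have hceq : c = g := (hG.1.dist_eq_zero_iff).mp hcg
  rw [hceq] at o3
  have ho3 := mem_int.mp o3
  have c1 : G.dist z t = G.dist t z := SimpleGraph.dist_comm
  have c2 : G.dist g z = G.dist z g := SimpleGraph.dist_comm
  have c3 : G.dist t g = G.dist g t := SimpleGraph.dist_comm
  omega

lemma cross_edge {A B : Set V} (hAB : A ∪ B = Set.univ) (hd : Disjoint A B) :
    ∀ {a b : V} (_ : G.Walk a b), a ∈ A → b ∈ B →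
      ∃ u v, G.Adj u v ∧ u ∈ A ∧ v ∈ B := by
  intro a b p
  induction p with
  | nil =>
    intro ha hb
    exact absurd hb (Set.disjoint_left.mp hd ha)
  | @cons a' c' b' hadj p ih =>
    intro ha hb
    by_cases hcA : c' ∈ A
    · exact ih hcA hb
    · have hcB : c' ∈ B := by
        have hu : c' ∈ A ∪ B := by rw [hAB]; exact Set.mem_univ c'
        rcases hu with h | h
        · exact absurd h hcA
        · exact h
      exact ⟨a', c', hadj, ha, hcB⟩

end MedianAux

open MedianAux in
/-- For any edge `uv` of a median graph, `W(u,v)` and `W(v,u)` are gated complementary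
halfspaces; conversely, any partition of the vertex set into two (nonempty) convex
sets is of this form for some edge `uv`. -/
theorem halfspaces_gated {V : Type*} (G : SimpleGraph V) (hG : MedianGraph G) :
    (∀ u v : V, G.Adj u v →
      Gated G (halfspaceW G u v) ∧ Gated G (halfspaceW G v u) ∧
      halfspaceW G v u = (halfspaceW G u v)ᶜ ∧
      GConvex G (halfspaceW G u v) ∧ GConvex G (halfspaceW G v u)) ∧
    (∀ A B : Set V, A.Nonempty → B.Nonempty → A ∪ B = Set.univ → Disjoint A B →
      GConvex G A → GConvex G B →
      ∃ u v : V, G.Adj u v ∧ A = halfspaceW G u v ∧ B = halfspaceW G v u) := by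
  have hc := hG.1
  constructor
  · intro u v huv
    have hconv1 := convexW hG huv
    have hconv2 := convexW hG huv.symm
    have hd1 : G.dist u v = 1 := SimpleGraph.dist_eq_one_iff_adj.mpr huv
    have hd2 : G.dist v u = 1 := by rw [SimpleGraph.dist_comm]; exact hd1
    have hne1 : (halfspaceW G u v).Nonempty := by
      refine ⟨u, ?_⟩
      simp only [halfspaceW, Set.mem_setOf_eq, SimpleGraph.dist_self]
      omega
    have hne2 : (halfspaceW G v u).Nonempty := by
      refine ⟨v, ?_⟩
      simp only [halfspaceW, Set.mem_setOf_eq, SimpleGraph.dist_self]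
      omega
    exact ⟨gated_of_convex hG hne1 hconv1, gated_of_convex hG hne2 hconv2,
      complW hG huv, hconv1, hconv2⟩
  · intro A B hA hB hAB hdisj hcA hcB
    obtain ⟨a, ha⟩ := hA
    obtain ⟨b, hb⟩ := hB
    obtain ⟨p⟩ := hc.preconnected a b
    obtain ⟨u, v, huv, huA, hvB⟩ := cross_edge hAB hdisj p ha hb
    have hd1 : G.dist u v = 1 := SimpleGraph.dist_eq_one_iff_adj.mpr huv
    have hd2 : G.dist v u = 1 := by rw [SimpleGraph.dist_comm]; exact hd1
    have hAW : ∀ z, z ∈ A → G.dist z u < G.dist z v := by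
      intro z hz
      by_contra hcon
      push_neg at hcon
      have hzv : G.dist z u = G.dist z v + 1 := by
        rcases parity hG huv z with h | h <;> omega
      have hvA : v ∈ A := hcA z hz u huA (mem_int.mpr (by omega))
      exact absurd hvB (Set.disjoint_left.mp hdisj hvA)
    have hBW : ∀ z, z ∈ B → G.dist z v < G.dist z u := by
      intro z hz
      by_contra hcon
      push_neg at hcon
      have hzv : G.dist z v = G.dist z u + 1 := by
        rcases parity hG huv z with h | h <;> omega
      have huB : u ∈ B := hcB z hz v hvB (mem_int.mpr (by omega))
      exact absurd huB (Set.disjoint_left.mp hdisj huA)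
    refine ⟨u, v, huv, ?_, ?_⟩
    · ext z
      simp only [halfspaceW, Set.mem_setOf_eq]
      constructor
      · exact hAW z
      · intro hz
        by_contra hzA
        have hzB : z ∈ B := by
          have hu : z ∈ A ∪ B := by rw [hAB]; exact Set.mem_univ z
          rcases hu with h | h
          · exact absurd h hzA
          · exact h
        have := hBW z hzB
        omega
    · ext z
      simp only [halfspaceW, Set.mem_setOf_eq]
      constructor
      · exact hBW z
      · intro hz
        by_contra hzB
        have hzA : z ∈ A := by
          have hu : z ∈ A ∪ B := by rw [hAB]; exact Set.mem_univ z
          rcases hu with h | h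
          · exact h
          · exact absurd h hzB
        have := hAW z hzA
        omega
end
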